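/- arXiv:2305.04606 — 2 statements merged into one kernel-verified Lean document; each statement's English description precedes it below -/
import Mathlib

section
/- For all 0 ≤ r ≤ m, the dual code of the Berman code Ber_n^{r}(m) is the Dual Berman code: Ber_n^{r}(m)^⊥ = B_n^{r}(m). -/
open scoped BigOperators

/-- The `l`-th block (of length `n^m`) of a vector of length `n^(m+1)`,
where the first coordinate of the index tuple selects the block. -/
def blockAt (n m : ℕ) (l : Fin n) (v : (Fin (m + 1) → Fin n) → ZMod 2) :
    (Fin m → Fin n) → ZMod 2 :=
  fun j => v (Fin.cons l j)

/-- Berman code `Ber_n^r(m) ⊆ F_2^{n^m}`, coordinates indexed by `H^m` with `H = Fin n`.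
`Ber_n^m(m) = {0}`, `Ber_n^0(m)` is the single parity-check code, and for `1 ≤ r`,
a codeword is a concatenation `(v_0|…|v_{n-1})` with each block in `Ber_n^{r-1}(m-1)`
and the sum of the blocks in `Ber_n^r(m-1)`. -/
def Ber (n : ℕ) : ℕ → (m : ℕ) → Set ((Fin m → Fin n) → ZMod 2)
  | _, 0 => {0}
  | 0, (m + 1) => {c | ∑ i, c i = 0}
  | (r + 1), (m + 1) =>
      {v | (∀ l : Fin n, blockAt n m l v ∈ Ber n r m) ∧
        (fun j => ∑ l : Fin n, v (Fin.cons l j)) ∈ Ber n (r + 1) m}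

/-- Dual Berman code `B_n^r(m) ⊆ F_2^{n^m}`.
`B_n^m(m)` is the full space, `B_n^0(m)` is the repetition code, and for `1 ≤ r`,
a codeword is `(u+u_0|…|u+u_{n-2}|u)` with each `u_l ∈ B_n^{r-1}(m-1)` and `u ∈ B_n^r(m-1)`. -/
def DBer (n : ℕ) : ℕ → (m : ℕ) → Set ((Fin m → Fin n) → ZMod 2)
  | _, 0 => Set.univ
  | 0, (m + 1) => {c | ∃ a : ZMod 2, c = fun _ => a}
  | (r + 1), (m + 1) =>
      {v | ∃ u ∈ DBer n (r + 1) m, ∃ w : Fin n → ((Fin m → Fin n) → ZMod 2),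
        (∀ l, w l ∈ DBer n r m) ∧
        (∀ l : Fin n, blockAt n m l v = if l.val = n - 1 then u else u + w l)}

/-- Star product of two codes: the span of all coordinatewise products. -/
def starProd {ι : Type*} (C D : Set (ι → ZMod 2)) : Submodule (ZMod 2) (ι → ZMod 2) :=
  Submodule.span (ZMod 2) {x | ∃ c ∈ C, ∃ d ∈ D, x = c * d}

/-- Dual code w.r.t. the standard bilinear form. -/
def dualCode {ι : Type*} [Fintype ι] (C : Set (ι → ZMod 2)) : Set (ι → ZMod 2) :=
  {x | ∀ c ∈ C, ∑ i, x i * c i = 0}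

/-- Partial order on tuples: `j ⪯ i` iff `supp(j) ⊆ supp(i)` and `j` agrees with `i` on
`supp(j)`. -/
def preceq {n m : ℕ} (j i : Fin m → Fin n) : Prop :=
  ∀ s, (j s).val ≠ 0 → j s = i s

instance {n m : ℕ} (j i : Fin m → Fin n) : Decidable (preceq j i) := by
  unfold preceq; infer_instance

/-- Hamming weight of a tuple in `H^m`: the number of nonzero entries. -/
def tupleWt {n m : ℕ} (j : Fin m → Fin n) : ℕ :=
  (Finset.univ.filter fun s => (j s).val ≠ 0).card

/-- The vector `c_m(i')`, the indicator of `{i : i ⪯ i'}`. -/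
def cm {n m : ℕ} (i' : Fin m → Fin n) : (Fin m → Fin n) → ZMod 2 :=
  fun i => if preceq i i' then 1 else 0

/-- The vector `d_m(i')`, the indicator of `{i : i ⪰ i'}`. -/
def dm {n m : ℕ} (i' : Fin m → Fin n) : (Fin m → Fin n) → ZMod 2 :=
  fun i => if preceq i' i then 1 else 0

/-- Standard basis vector of `F_2^{n^m}` at coordinate `v`. -/
def eVec {n m : ℕ} (v : Fin m → Fin n) : (Fin m → Fin n) → ZMod 2 :=
  fun i => if i = v then 1 else 0


section Aux

lemma sum_split {n m : ℕ} (f : (Fin (m + 1) → Fin n) → ZMod 2) :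
    ∑ i, f i = ∑ l : Fin n, ∑ j : Fin m → Fin n, f (Fin.cons l j) := by
  rw [← Fintype.sum_equiv (Fin.consEquiv fun _ => Fin n)
    (fun p => f (Fin.cons p.1 p.2)) f (fun p => rfl), Fintype.sum_prod_type]

lemma zero_mem_Ber (n : ℕ) : ∀ m r, (0 : (Fin m → Fin n) → ZMod 2) ∈ Ber n r m := by
  intro m
  induction m with
  | zero => intro r; cases r <;> simp [Ber]
  | succ m ih =>
    intro r
    cases r with
    | zero => simp [Ber]
    | succ r =>
      refine ⟨fun l => ?_, ?_⟩
      · have : blockAt n m l 0 = 0 := rfl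
        rw [this]; exact ih r
      · have : (fun j => ∑ l : Fin n, (0 : (Fin (m+1) → Fin n) → ZMod 2) (Fin.cons l j))
            = 0 := by funext j; simp
        rw [this]; exact ih (r + 1)

lemma Ber_sum (n : ℕ) : ∀ m r (c : (Fin m → Fin n) → ZMod 2), c ∈ Ber n r m → ∑ i, c i = 0 := by
  intro m
  induction m with
  | zero =>
    intro r c hc
    cases r <;> · simp only [Ber, Set.mem_singleton_iff] at hc; simp [hc]
  | succ m ih =>
    intro r c hc
    cases r with
    | zero => exact hc
    | succ r =>
      rw [sum_split]
      have := hc.1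
      refine Finset.sum_eq_zero fun l _ => ?_
      exact ih r _ (this l)

lemma Ber_nested (n : ℕ) : ∀ m r, Ber n (r + 1) m ⊆ Ber n r m := by
  intro m
  induction m with
  | zero => intro r; cases r <;> exact fun c hc => hc
  | succ m ih =>
    intro r
    cases r with
    | zero =>
      intro c hc
      show ∑ i, c i = 0
      rw [sum_split]
      refine Finset.sum_eq_zero fun l _ => ?_
      exact Ber_sum n m 0 _ (hc.1 l)
    | succ r =>
      intro c hc
      exact ⟨fun l => ih r (hc.1 l), ih (r + 1) hc.2⟩

lemma sum_ite_or {M : Type*} [AddCommMonoid M] {n : ℕ} {p q : Fin n} (hpq : p ≠ q)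
    (f : Fin n → M) : ∑ k, (if k = p ∨ k = q then f k else 0) = f p + f q := by
  rw [← Finset.sum_filter]
  have h : Finset.univ.filter (fun k => k = p ∨ k = q) = {p, q} := by
    ext k; simp
  rw [h, Finset.sum_pair hpq]

lemma sum_ite_single {M : Type*} [AddCommMonoid M] {ι : Type*} [Fintype ι]
    [DecidableEq ι] (p : ι)
    (f : ι → M) : ∑ k, (if k = p then f k else 0) = f p := by
  simp

lemma dual_Ber (n : ℕ) (hn : 2 ≤ n) :
    ∀ m r, dualCode (Ber n r m) = DBer n r m := by
  intro m
  induction m with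
  | zero =>
    intro r
    have hB : Ber n r 0 = {0} := by cases r <;> rfl
    have hD : DBer n r 0 = Set.univ := by cases r <;> rfl
    rw [hB, hD]
    ext x
    simp [dualCode]
  | succ m ih =>
    intro r
    cases r with
    | zero =>
      ext x
      constructor
      · intro hx
        set i0 : Fin (m + 1) → Fin n := fun _ => ⟨0, by omega⟩ with hi0
        refine ⟨x i0, ?_⟩
        funext i
        by_cases h : i = i0
        · rw [h]
        · have hc : (fun k => (if k = i then (1 : ZMod 2) else 0)
              + (if k = i0 then 1 else 0)) ∈ Ber n 0 (m + 1) := by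
            show (∑ k, ((if k = i then (1 : ZMod 2) else 0) + (if k = i0 then 1 else 0))) = 0
            rw [Finset.sum_add_distrib, sum_ite_single i (fun _ => (1 : ZMod 2)),
              sum_ite_single i0 (fun _ => (1 : ZMod 2))]
            decide
          have h2 := hx _ hc
          simp only [mul_add, Finset.sum_add_distrib, mul_ite, mul_one, mul_zero] at h2
          rw [sum_ite_single i x, sum_ite_single i0 x] at h2
          have : ∀ a b : ZMod 2, a + b = 0 → a = b := by decide
          exact this _ _ h2
      · rintro ⟨a, rfl⟩ c hc
        have hc' : ∑ i, c i = 0 := hc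
        rw [← Finset.mul_sum, hc', mul_zero]
    | succ r =>
      have IHA := ih r
      have IHB := ih (r + 1)
      have hlast : n - 1 < n := by omega
      set la : Fin n := ⟨n - 1, hlast⟩ with hla
      have hval : ∀ l : Fin n, l.val = n - 1 ↔ l = la := by
        intro l; constructor
        · intro h; exact Fin.ext h
        · intro h; rw [h]
      ext x
      constructor
      · intro hx
        have hx' : ∀ c ∈ Ber n (r + 1) (m + 1), ∑ i, x i * c i = 0 := hx
        -- u := last block of x
        have hu : blockAt n m la x ∈ DBer n (r + 1) m := by
          rw [← IHB]
          intro s hs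
          set v : (Fin (m + 1) → Fin n) → ZMod 2 :=
            fun i => if i 0 = la then s (fun t => i t.succ) else 0 with hv
          have hvc : ∀ (l : Fin n) (j : Fin m → Fin n),
              v (Fin.cons l j) = if l = la then s j else 0 := by
            intro l j; simp [hv, Fin.cons_zero, Fin.cons_succ]
          have hvmem : v ∈ Ber n (r + 1) (m + 1) := by
            refine ⟨fun l => ?_, ?_⟩
            · have hb : blockAt n m l v = fun j => if l = la then s j else 0 := by
                funext j; exact hvc l j
              rw [hb]
              by_cases h : l = la
              · simp only [if_pos h]
                exact Ber_nested n m r hs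
              · simp only [if_neg h]
                exact zero_mem_Ber n m r
            · have hb : (fun j => ∑ l : Fin n, v (Fin.cons l j)) = s := by
                funext j
                simp only [hvc]
                exact sum_ite_single la (fun _ => s j)
              rw [hb]; exact hs
          have h0 := hx' v hvmem
          rw [sum_split (fun i => x i * v i)] at h0
          simp only [hvc, mul_ite, mul_zero] at h0
          have hout : ∀ l : Fin n,
              (∑ j : Fin m → Fin n, if l = la then x (Fin.cons l j) * s j else 0)
              = if l = la then ∑ j : Fin m → Fin n, x (Fin.cons l j) * s j else 0 := by
            intro l; split <;> simp
          rw [Finset.sum_congr rfl (fun l _ => hout l),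
            sum_ite_single la (fun l => ∑ j : Fin m → Fin n, x (Fin.cons l j) * s j)] at h0
          exact h0
        -- blocks
        have hw : ∀ l : Fin n, l ≠ la →
            blockAt n m l x + blockAt n m la x ∈ DBer n r m := by
          intro l hl
          rw [← IHA]
          intro a ha
          set v : (Fin (m + 1) → Fin n) → ZMod 2 :=
            fun i => if i 0 = l ∨ i 0 = la then a (fun t => i t.succ) else 0 with hv
          have hvc : ∀ (l' : Fin n) (j : Fin m → Fin n),
              v (Fin.cons l' j) = if l' = l ∨ l' = la then a j else 0 := by
            intro l' j; simp [hv, Fin.cons_zero, Fin.cons_succ]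
          have hvmem : v ∈ Ber n (r + 1) (m + 1) := by
            refine ⟨fun l' => ?_, ?_⟩
            · have hb : blockAt n m l' v = fun j => if l' = l ∨ l' = la then a j else 0 := by
                funext j; exact hvc l' j
              rw [hb]
              by_cases h : l' = l ∨ l' = la
              · simp only [if_pos h]; exact ha
              · simp only [if_neg h]; exact zero_mem_Ber n m r
            · have hb : (fun j => ∑ l' : Fin n, v (Fin.cons l' j)) = 0 := by
                funext j
                simp only [hvc]
                rw [sum_ite_or hl (fun _ => a j)]
                exact CharTwo.add_self_eq_zero _
              rw [hb]; exact zero_mem_Ber n m (r + 1)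
          have h0 := hx' v hvmem
          rw [sum_split (fun i => x i * v i)] at h0
          simp only [hvc, mul_ite, mul_zero] at h0
          have hout : ∀ l' : Fin n,
              (∑ j : Fin m → Fin n, if l' = l ∨ l' = la then x (Fin.cons l' j) * a j else 0)
              = if l' = l ∨ l' = la then ∑ j : Fin m → Fin n, x (Fin.cons l' j) * a j else 0 := by
            intro l'; split <;> simp
          rw [Finset.sum_congr rfl (fun l' _ => hout l'),
            sum_ite_or hl (fun l' => ∑ j : Fin m → Fin n, x (Fin.cons l' j) * a j)] at h0
          calc ∑ i, (blockAt n m l x + blockAt n m la x) i * a i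
              = (∑ j : Fin m → Fin n, x (Fin.cons l j) * a j)
                + ∑ j : Fin m → Fin n, x (Fin.cons la j) * a j := by
                rw [← Finset.sum_add_distrib]
                refine Finset.sum_congr rfl fun j _ => ?_
                simp [blockAt, add_mul]
            _ = 0 := h0
        refine ⟨blockAt n m la x, hu,
          fun l => if l = la then 0 else blockAt n m l x + blockAt n m la x,
          fun l => ?_, fun l => ?_⟩
        · by_cases h : l = la
          · simp only [if_pos h]
            rw [← IHA]
            intro c hc
            simp
          · simp only [if_neg h]
            exact hw l h
        · by_cases h : l = la
          · rw [if_pos ((hval l).2 h), h]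
          · simp only [if_neg (fun hh => h ((hval l).1 hh)), if_neg h]
            funext j
            have h2 : ∀ a b : ZMod 2, a = b + (a + b) := by decide
            exact h2 _ _
      · rintro ⟨u, hu, w, hw, hblock⟩ c hc
        obtain ⟨hc1, hc2⟩ := hc
        have hxv : ∀ (l : Fin n) (j : Fin m → Fin n),
            x (Fin.cons l j) = u j + (if l = la then 0 else w l j) := by
          intro l j
          have h1 := congrFun (hblock l) j
          by_cases h : l = la
          · rw [if_pos ((hval l).2 h)] at h1
            rw [if_pos h, add_zero]
            exact h1
          · rw [if_neg (fun hh => h ((hval l).1 hh))] at h1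
            rw [if_neg h]
            exact h1
        show ∑ i, x i * c i = 0
        rw [sum_split (fun i => x i * c i)]
        have e1 : ∑ l : Fin n, ∑ j : Fin m → Fin n, x (Fin.cons l j) * c (Fin.cons l j)
            = (∑ j : Fin m → Fin n, u j * ∑ l : Fin n, c (Fin.cons l j))
              + ∑ l : Fin n, ∑ j : Fin m → Fin n,
                (if l = la then 0 else w l j) * c (Fin.cons l j) := by
          simp only [hxv, add_mul, Finset.sum_add_distrib]
          congr 1
          rw [Finset.sum_comm]
          refine Finset.sum_congr rfl fun j _ => ?_
          rw [Finset.mul_sum]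
        rw [e1]
        have h2 : ∑ j : Fin m → Fin n, u j * ∑ l : Fin n, c (Fin.cons l j) = 0 := by
          rw [← IHB] at hu
          exact hu _ hc2
        have h3 : ∑ l : Fin n, ∑ j : Fin m → Fin n,
            (if l = la then 0 else w l j) * c (Fin.cons l j) = 0 := by
          refine Finset.sum_eq_zero fun l _ => ?_
          by_cases h : l = la
          · simp [h]
          · simp only [if_neg h]
            have hwl := hw l
            rw [← IHA] at hwl
            exact hwl _ (hc1 l)
        rw [h2, h3, add_zero]

end Aux

/-- `Ber_n^r(m)^⊥ = B_n^r(m)` for all `0 ≤ r ≤ m`. -/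
theorem stmt5 (n m r : ℕ) (hn : 2 ≤ n) (hr : r ≤ m) :
    dualCode (Ber n r m) = DBer n r m :=
  dual_Ber n hn m r
end

section
/- The set {d_m(i') : i' ∈ H^m, 0 ≤ wt(i') ≤ r} is a basis of the Dual Berman code B_n^{r}(m), for m ≥ 1 and 0 ≤ r ≤ m. -/
open scoped BigOperators

section Aux

variable {n : ℕ}

lemma DBer_m_zero (n r : ℕ) : DBer n r 0 = Set.univ := by cases r <;> rfl

lemma preceq_cons_left {m : ℕ} (a : Fin n) (j : Fin m → Fin n) (i : Fin (m+1) → Fin n) :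
    preceq (Fin.cons a j) i ↔ ((a.val ≠ 0 → a = i 0) ∧ preceq j (Fin.tail i)) := by
  unfold preceq
  rw [Fin.forall_fin_succ]
  simp [Fin.tail]

lemma preceq_cons_right {m : ℕ} (v : Fin (m+1) → Fin n) (a : Fin n) (j : Fin m → Fin n) :
    preceq v (Fin.cons a j) ↔ (((v 0).val ≠ 0 → v 0 = a) ∧ preceq (Fin.tail v) j) := by
  unfold preceq
  rw [Fin.forall_fin_succ]
  simp [Fin.tail]

lemma dm_cons_apply {m : ℕ} (a : Fin n) (j : Fin m → Fin n) (l : Fin n) (k : Fin m → Fin n) :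
    dm (Fin.cons a j) (Fin.cons l k)
      = if ((a.val ≠ 0 → a = l) ∧ preceq j k) then (1 : ZMod 2) else 0 := by
  have h : preceq (Fin.cons a j) (Fin.cons l k) ↔ ((a.val ≠ 0 → a = l) ∧ preceq j k) := by
    rw [preceq_cons_left]
    simp [Fin.tail_cons]
  simp [dm, h]

lemma tupleWt_cons {m : ℕ} (a : Fin n) (j : Fin m → Fin n) :
    tupleWt (Fin.cons a j) = (if a.val ≠ 0 then 1 else 0) + tupleWt j := by
  unfold tupleWt
  rw [Finset.card_filter, Finset.card_filter, Fin.sum_univ_succ]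
  simp

lemma scalar_sum (a b : Fin n) :
    (∑ l : Fin n, if ((a.val ≠ 0 → a = l) ∧ (l.val ≠ 0 → l = b)) then (1 : ZMod 2) else 0)
      = if a = b then 1 else 0 := by
  classical
  rw [Finset.sum_boole]
  by_cases ha : a.val = 0
  · by_cases hb : b.val = 0
    · have hab : a = b := Fin.ext (ha.trans hb.symm)
      have hfil : (Finset.univ.filter
          fun l : Fin n => ((a.val ≠ 0 → a = l) ∧ (l.val ≠ 0 → l = b))) = {b} := by
        ext l
        simp only [Finset.mem_filter, Finset.mem_univ, true_and, Finset.mem_singleton]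
        constructor
        · rintro ⟨-, h2⟩
          by_cases hl : l.val = 0
          · exact Fin.ext (hl.trans hb.symm)
          · exact h2 hl
        · rintro rfl
          exact ⟨fun h => absurd ha h, fun h => rfl⟩
      rw [hfil]
      simp [hab]
    · have hab : a ≠ b := fun h => hb (h ▸ ha)
      have hfil : (Finset.univ.filter
          fun l : Fin n => ((a.val ≠ 0 → a = l) ∧ (l.val ≠ 0 → l = b))) = {a, b} := by
        ext l
        simp only [Finset.mem_filter, Finset.mem_univ, true_and, Finset.mem_insert,
          Finset.mem_singleton]
        constructor
        · rintro ⟨-, h2⟩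
          by_cases hl : l.val = 0
          · exact Or.inl (Fin.ext (hl.trans ha.symm))
          · exact Or.inr (h2 hl)
        · rintro (rfl | rfl)
          · exact ⟨fun _ => rfl, fun h => absurd ha h⟩
          · exact ⟨fun h => absurd ha h, fun _ => rfl⟩
      rw [hfil, Finset.card_insert_of_notMem (by simpa using hab), Finset.card_singleton,
        if_neg hab]
      decide
  · by_cases hab : a = b
    · have hfil : (Finset.univ.filter
          fun l : Fin n => ((a.val ≠ 0 → a = l) ∧ (l.val ≠ 0 → l = b))) = {a} := by
        ext l
        simp only [Finset.mem_filter, Finset.mem_univ, true_and, Finset.mem_singleton]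
        constructor
        · rintro ⟨h1, -⟩
          exact (h1 ha).symm
        · rintro rfl
          exact ⟨fun _ => rfl, fun _ => hab⟩
      rw [hfil, Finset.card_singleton, if_pos hab]
      simp
    · have hfil : (Finset.univ.filter
          fun l : Fin n => ((a.val ≠ 0 → a = l) ∧ (l.val ≠ 0 → l = b))) = ∅ := by
        ext l
        simp only [Finset.mem_filter, Finset.mem_univ, true_and, Finset.notMem_empty,
          iff_false, not_and]
        intro h1
        have hal := h1 ha
        subst hal
        intro h2
        exact hab (h2 ha)
      rw [hfil, Finset.card_empty, if_neg hab]
      simp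

lemma key_sum : ∀ {m : ℕ} (v i : Fin m → Fin n),
    (∑ i' : Fin m → Fin n, if (preceq v i' ∧ preceq i' i) then (1 : ZMod 2) else 0)
      = if v = i then 1 else 0 := by
  intro m
  induction m with
  | zero =>
      intro v i
      have hvi : v = i := Subsingleton.elim v i
      have h1 : ∀ (x y : Fin 0 → Fin n), preceq x y := fun x y s => s.elim0
      rw [Fintype.sum_unique]
      simp [h1, hvi]
  | succ m ih =>
      intro v i
      have hsplit : ∀ (a : Fin n) (j : Fin m → Fin n),
          (if (preceq v (Fin.cons a j) ∧ preceq (Fin.cons a j) i) then (1 : ZMod 2) else 0)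
          = (if (((v 0).val ≠ 0 → v 0 = a) ∧ (a.val ≠ 0 → a = i 0)) then (1 : ZMod 2) else 0)
            * (if (preceq (Fin.tail v) j ∧ preceq j (Fin.tail i)) then (1 : ZMod 2) else 0) := by
        intro a j
        by_cases h1 : ((v 0).val ≠ 0 → v 0 = a) <;>
          by_cases h2 : (a.val ≠ 0 → a = i 0) <;>
          by_cases h3 : preceq (Fin.tail v) j <;>
          by_cases h4 : preceq j (Fin.tail i) <;>
          simp [preceq_cons_right, preceq_cons_left, h1, h2, h3, h4]
      have hstep : ∀ a : Fin n,
          (∑ j : Fin m → Fin n,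
            (if (preceq v (Fin.cons a j) ∧ preceq (Fin.cons a j) i) then (1 : ZMod 2) else 0))
          = (if (((v 0).val ≠ 0 → v 0 = a) ∧ (a.val ≠ 0 → a = i 0)) then (1 : ZMod 2) else 0)
            * (if Fin.tail v = Fin.tail i then 1 else 0) := by
        intro a
        calc (∑ j : Fin m → Fin n,
            (if (preceq v (Fin.cons a j) ∧ preceq (Fin.cons a j) i) then (1 : ZMod 2) else 0))
            = ∑ j : Fin m → Fin n,
              (if (((v 0).val ≠ 0 → v 0 = a) ∧ (a.val ≠ 0 → a = i 0)) then (1 : ZMod 2) else 0)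
                * (if (preceq (Fin.tail v) j ∧ preceq j (Fin.tail i)) then (1 : ZMod 2) else 0) :=
              Finset.sum_congr rfl fun j _ => hsplit a j
          _ = (if (((v 0).val ≠ 0 → v 0 = a) ∧ (a.val ≠ 0 → a = i 0)) then (1 : ZMod 2) else 0)
                * ∑ j : Fin m → Fin n,
                  (if (preceq (Fin.tail v) j ∧ preceq j (Fin.tail i)) then (1 : ZMod 2) else 0) :=
              (Finset.mul_sum _ _ _).symm
          _ = (if (((v 0).val ≠ 0 → v 0 = a) ∧ (a.val ≠ 0 → a = i 0)) then (1 : ZMod 2) else 0)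
                * (if Fin.tail v = Fin.tail i then 1 else 0) := by rw [ih]
      have hvi : v = i ↔ (v 0 = i 0 ∧ Fin.tail v = Fin.tail i) := by
        constructor
        · rintro rfl
          exact ⟨rfl, rfl⟩
        · rintro ⟨h0, ht⟩
          rw [← Fin.cons_self_tail v, ← Fin.cons_self_tail i, h0, ht]
      calc (∑ i' : Fin (m+1) → Fin n, if (preceq v i' ∧ preceq i' i) then (1 : ZMod 2) else 0)
          = ∑ p : Fin n × (Fin m → Fin n),
              (if (preceq v (Fin.cons p.1 p.2) ∧ preceq (Fin.cons p.1 p.2) i)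
                then (1 : ZMod 2) else 0) :=
            (Fintype.sum_bijective _
              (Fin.consEquiv (fun _ : Fin (m+1) => Fin n)).bijective _ _ (fun p => rfl)).symm
        _ = ∑ a : Fin n, ∑ j : Fin m → Fin n,
              (if (preceq v (Fin.cons a j) ∧ preceq (Fin.cons a j) i) then (1 : ZMod 2) else 0) :=
            Fintype.sum_prod_type _
        _ = ∑ a : Fin n,
              (if (((v 0).val ≠ 0 → v 0 = a) ∧ (a.val ≠ 0 → a = i 0)) then (1 : ZMod 2) else 0)
                * (if Fin.tail v = Fin.tail i then 1 else 0) :=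
            Finset.sum_congr rfl fun a _ => hstep a
        _ = (∑ a : Fin n,
              (if (((v 0).val ≠ 0 → v 0 = a) ∧ (a.val ≠ 0 → a = i 0)) then (1 : ZMod 2) else 0))
                * (if Fin.tail v = Fin.tail i then 1 else 0) := (Finset.sum_mul _ _ _).symm
        _ = (if v 0 = i 0 then (1 : ZMod 2) else 0)
                * (if Fin.tail v = Fin.tail i then 1 else 0) := by rw [scalar_sum]
        _ = if v = i then 1 else 0 := by
            by_cases h0 : v 0 = i 0 <;> by_cases ht : Fin.tail v = Fin.tail i <;>
              simp [h0, ht, hvi]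

lemma eVec_eq_sum_dm {m : ℕ} (v : Fin m → Fin n) :
    eVec v = ∑ i' : Fin m → Fin n, if preceq v i' then dm i' else 0 := by
  funext i
  rw [Finset.sum_apply]
  have h : ∀ i' : Fin m → Fin n, (if preceq v i' then dm i' else 0) i
      = if (preceq v i' ∧ preceq i' i) then (1 : ZMod 2) else 0 := by
    intro i'
    by_cases h1 : preceq v i' <;> by_cases h2 : preceq i' i <;> simp [h1, h2, dm]
  rw [Finset.sum_congr rfl fun i' _ => h i', key_sum]
  simp only [eVec]
  by_cases hvi : v = i
  · simp [hvi]
  · have hvi' : i ≠ v := fun h' => hvi h'.symm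
    simp [hvi, hvi']

lemma top_le_span_dm (m : ℕ) :
    ⊤ ≤ Submodule.span (ZMod 2) (Set.range (dm (n := n) (m := m))) := by
  intro x _
  have hx : x = ∑ v : Fin m → Fin n, x v • eVec v := by
    funext i
    rw [Finset.sum_apply]
    simp only [Pi.smul_apply, eVec, smul_eq_mul, mul_ite, mul_one, mul_zero]
    rw [Finset.sum_ite_eq Finset.univ i x]
    simp
  rw [hx]
  refine Submodule.sum_mem _ fun v _ => Submodule.smul_mem _ _ ?_
  rw [eVec_eq_sum_dm]
  refine Submodule.sum_mem _ fun i' _ => ?_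
  by_cases h : preceq v i'
  · rw [if_pos h]
    exact Submodule.subset_span ⟨i', rfl⟩
  · rw [if_neg h]
    exact Submodule.zero_mem _

lemma li_dm (m : ℕ) : LinearIndependent (ZMod 2) (dm (n := n) (m := m)) :=
  linearIndependent_of_top_le_span_of_card_eq_finrank (top_le_span_dm m)
    (Module.finrank_fintype_fun_eq_card _).symm

end Aux

section DBerLemmas

variable {n : ℕ}

lemma DBer_zero_mem (n : ℕ) : ∀ (m r : ℕ), (0 : (Fin m → Fin n) → ZMod 2) ∈ DBer n r m := by
  intro m
  induction m with
  | zero =>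
      intro r
      rw [DBer_m_zero]
      trivial
  | succ m ih =>
      intro r
      cases r with
      | zero => exact ⟨0, rfl⟩
      | succ r =>
          refine ⟨0, ih _, fun _ => 0, fun _ => ih _, fun l => ?_⟩
          funext k
          by_cases h : l.val = n - 1 <;> simp [h, blockAt]

lemma DBer_add_mem (n : ℕ) : ∀ (m r : ℕ) (a b : (Fin m → Fin n) → ZMod 2),
    a ∈ DBer n r m → b ∈ DBer n r m → a + b ∈ DBer n r m := by
  intro m
  induction m with
  | zero =>
      intro r a b _ _
      rw [DBer_m_zero]
      trivial
  | succ m ih =>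
      intro r a b ha hb
      cases r with
      | zero =>
          obtain ⟨x, rfl⟩ := ha
          obtain ⟨y, rfl⟩ := hb
          exact ⟨x + y, rfl⟩
      | succ r =>
          obtain ⟨u1, hu1, w1, hw1, hb1⟩ := ha
          obtain ⟨u2, hu2, w2, hw2, hb2⟩ := hb
          refine ⟨u1 + u2, ih _ _ _ hu1 hu2, fun l => w1 l + w2 l,
            fun l => ih _ _ _ (hw1 l) (hw2 l), fun l => ?_⟩
          have hblk : blockAt n m l (a + b) = blockAt n m l a + blockAt n m l b := rfl
          rw [hblk, hb1 l, hb2 l]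
          by_cases h : l.val = n - 1
          · simp [h]
          · simp only [h, if_false]
            abel

lemma DBer_smul_mem (n m r : ℕ) (c : ZMod 2) (x : (Fin m → Fin n) → ZMod 2)
    (hx : x ∈ DBer n r m) : c • x ∈ DBer n r m := by
  have hc : ∀ c : ZMod 2, c = 0 ∨ c = 1 := by decide
  rcases hc c with rfl | rfl
  · rw [zero_smul]
    exact DBer_zero_mem n m r
  · rw [one_smul]
    exact hx

def DBerM (n r m : ℕ) : Submodule (ZMod 2) ((Fin m → Fin n) → ZMod 2) where
  carrier := DBer n r m
  add_mem' := fun ha hb => DBer_add_mem n _ _ _ _ ha hb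
  zero_mem' := DBer_zero_mem n _ _
  smul_mem' := fun c x hx => DBer_smul_mem n _ _ c x hx

lemma dm_of_wt_zero {m : ℕ} (i' : Fin m → Fin n) (h : tupleWt i' = 0) :
    dm i' = fun _ => (1 : ZMod 2) := by
  unfold tupleWt at h
  have h' : ∀ s, (i' s).val = 0 := by
    intro s
    by_contra hs
    have hmem : s ∈ Finset.univ.filter fun s => (i' s).val ≠ 0 := by simp [hs]
    rw [Finset.card_eq_zero.mp h] at hmem
    simp at hmem
  funext i
  have hp : preceq i' i := fun s hs => absurd (h' s) hs
  simp [dm, hp]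

lemma dm_mem_DBer (n : ℕ) : ∀ (m r : ℕ) (i' : Fin m → Fin n), tupleWt i' ≤ r →
    dm i' ∈ DBer n r m := by
  intro m
  induction m with
  | zero =>
      intro r i' _
      rw [DBer_m_zero]
      trivial
  | succ m ih =>
      intro r i' hwt
      cases r with
      | zero => exact ⟨1, dm_of_wt_zero i' (Nat.le_zero.mp hwt)⟩
      | succ r =>
          obtain ⟨a, j, rfl⟩ : ∃ a jj, i' = Fin.cons a jj :=
            ⟨i' 0, Fin.tail i', (Fin.cons_self_tail i').symm⟩
          rw [tupleWt_cons] at hwt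
          by_cases ha : a.val = 0
          · rw [if_neg (by simpa using ha)] at hwt
            refine ⟨dm j, ih _ j (by omega), fun _ => 0, fun _ => DBer_zero_mem n m r,
              fun l => ?_⟩
            funext k
            rw [show blockAt n m l (dm (Fin.cons a j)) k = dm (Fin.cons a j) (Fin.cons l k)
              from rfl, dm_cons_apply]
            by_cases h : l.val = n - 1 <;> simp [h, dm, ha]
          · rw [if_pos ha] at hwt
            have hj : tupleWt j ≤ r := by omega
            by_cases han : a.val = n - 1
            · refine ⟨dm j, ih _ j (le_trans hj (Nat.le_succ r)), fun _ => dm j,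
                fun _ => ih _ j hj, fun l => ?_⟩
              funext k
              rw [show blockAt n m l (dm (Fin.cons a j)) k = dm (Fin.cons a j) (Fin.cons l k)
                from rfl, dm_cons_apply]
              by_cases h : l.val = n - 1
              · have hla : a = l := Fin.ext (han.trans h.symm)
                subst hla
                simp [h, dm, ha]
              · have hla : a ≠ l := fun he => h (he ▸ han)
                have hcond : ¬((a.val ≠ 0 → a = l) ∧ preceq j k) := fun hc => hla (hc.1 ha)
                simp [h, hcond, CharTwo.add_self_eq_zero]
            · refine ⟨0, DBer_zero_mem n m (r+1), fun l => if l = a then dm j else 0,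
                fun l => ?_, fun l => ?_⟩
              · by_cases h : l = a
                · simpa [h] using ih r j hj
                · simpa [h] using DBer_zero_mem n m r
              · funext k
                rw [show blockAt n m l (dm (Fin.cons a j)) k = dm (Fin.cons a j) (Fin.cons l k)
                  from rfl, dm_cons_apply]
                by_cases h : l.val = n - 1
                · have hla : a ≠ l := fun he => han (he ▸ h)
                  have hcond : ¬((a.val ≠ 0 → a = l) ∧ preceq j k) := fun hc => hla (hc.1 ha)
                  simp [h, hcond]
                · by_cases hla : l = a
                  · subst hla
                    simp [h, dm, ha]
                  · have hcond : ¬((a.val ≠ 0 → a = l) ∧ preceq j k) :=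
                      fun hc => hla (hc.1 ha).symm
                    simp [h, hcond, hla]

def dmSpan (n m r : ℕ) : Submodule (ZMod 2) ((Fin m → Fin n) → ZMod 2) :=
  Submodule.span (ZMod 2)
    (Set.range (fun i' : {i' : Fin m → Fin n // tupleWt i' ≤ r} => dm i'.1))

lemma dm_mem_dmSpan {m r : ℕ} (j' : Fin m → Fin n) (h : tupleWt j' ≤ r) :
    dm j' ∈ dmSpan n m r :=
  Submodule.subset_span ⟨⟨j', h⟩, rfl⟩

def constL (n m : ℕ) :
    ((Fin m → Fin n) → ZMod 2) →ₗ[ZMod 2] ((Fin (m+1) → Fin n) → ZMod 2) where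
  toFun u := fun i => u (Fin.tail i)
  map_add' _ _ := rfl
  map_smul' _ _ := rfl

def embL (n m : ℕ) (l : Fin n) :
    ((Fin m → Fin n) → ZMod 2) →ₗ[ZMod 2] ((Fin (m+1) → Fin n) → ZMod 2) where
  toFun u := fun i => if i 0 = l then u (Fin.tail i) else 0
  map_add' u v := by
    funext i
    by_cases h : i 0 = l <;> simp [h]
  map_smul' c u := by
    funext i
    by_cases h : i 0 = l <;> simp [h]

@[simp] lemma constL_apply {m : ℕ} (u : (Fin m → Fin n) → ZMod 2) (i : Fin (m+1) → Fin n) :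
    constL n m u i = u (Fin.tail i) := rfl

@[simp] lemma embL_apply {m : ℕ} (l : Fin n) (u : (Fin m → Fin n) → ZMod 2)
    (i : Fin (m+1) → Fin n) : embL n m l u i = if i 0 = l then u (Fin.tail i) else 0 := rfl

lemma constL_dm {m : ℕ} (hn : 0 < n) (j' : Fin m → Fin n) :
    constL n m (dm j') = dm (Fin.cons (⟨0, hn⟩ : Fin n) j') := by
  funext i
  rw [constL_apply, show dm (Fin.cons (⟨0, hn⟩ : Fin n) j') i
      = dm (Fin.cons (⟨0, hn⟩ : Fin n) j') (Fin.cons (i 0) (Fin.tail i)) from by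
        rw [Fin.cons_self_tail], dm_cons_apply]
  simp [dm]

lemma embL_dm {m : ℕ} (l : Fin n) (hl : l.val ≠ 0) (j' : Fin m → Fin n) :
    embL n m l (dm j') = dm (Fin.cons l j') := by
  funext i
  rw [embL_apply, show dm (Fin.cons l j') i
      = dm (Fin.cons l j') (Fin.cons (i 0) (Fin.tail i)) from by
        rw [Fin.cons_self_tail], dm_cons_apply]
  by_cases h : i 0 = l
  · have hcond : (l.val ≠ 0 → l = i 0) ∧ True := ⟨fun _ => h.symm, trivial⟩
    simp [h, dm, hcond.1]
  · have hcond : ¬((l.val ≠ 0 → l = i 0) ∧ preceq j' (Fin.tail i)) :=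
      fun hc => h (hc.1 hl).symm
    simp [h, hcond]

lemma embL_zero_val {m : ℕ} (hn : 0 < n) (u : (Fin m → Fin n) → ZMod 2) :
    embL n m (⟨0, hn⟩ : Fin n) u
      = constL n m u
        + ∑ l ∈ Finset.univ.filter (fun l : Fin n => l.val ≠ 0), embL n m l u := by
  funext i
  rw [Pi.add_apply, Finset.sum_apply]
  simp only [embL_apply, constL_apply]
  rw [Finset.sum_ite_eq]
  by_cases h : (i 0).val = 0
  · have h1 : i 0 = (⟨0, hn⟩ : Fin n) := Fin.ext h
    have h2 : i 0 ∉ Finset.univ.filter (fun l : Fin n => l.val ≠ 0) := by simp [h]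
    simp [h1, h2]
  · have h1 : i 0 ≠ (⟨0, hn⟩ : Fin n) := fun he => h (by rw [he])
    have h2 : i 0 ∈ Finset.univ.filter (fun l : Fin n => l.val ≠ 0) := by simp [h]
    simp [h1, h2, CharTwo.add_self_eq_zero]

lemma DBer_subset_span (n : ℕ) (hn : 0 < n) :
    ∀ (m r : ℕ), DBer n r m ⊆ (dmSpan n m r : Set ((Fin m → Fin n) → ZMod 2)) := by
  intro m
  induction m with
  | zero =>
      intro r x _
      have hx : x = x Fin.elim0 • dm (Fin.elim0 : Fin 0 → Fin n) := by
        funext i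
        have hi : i = Fin.elim0 := Subsingleton.elim _ _
        rw [hi]
        have h1 : preceq (Fin.elim0 : Fin 0 → Fin n) Fin.elim0 := fun s => s.elim0
        simp [dm, h1]
      rw [hx]
      exact Submodule.smul_mem _ _ (dm_mem_dmSpan _ (Nat.zero_le r))
  | succ m ih =>
      intro r x hx
      cases r with
      | zero =>
          obtain ⟨a, rfl⟩ := hx
          have hc : ∀ c : ZMod 2, c = 0 ∨ c = 1 := by decide
          rcases hc a with rfl | rfl
          · have h0 : (fun _ : Fin (m+1) → Fin n => (0 : ZMod 2))
                = (0 : (Fin (m+1) → Fin n) → ZMod 2) := rfl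
            rw [h0]
            exact Submodule.zero_mem _
          · have h1 : (fun _ : Fin (m+1) → Fin n => (1 : ZMod 2))
                = dm (fun _ : Fin (m+1) => (⟨0, hn⟩ : Fin n)) := by
              funext i
              have hp : preceq (fun _ : Fin (m+1) => (⟨0, hn⟩ : Fin n)) i := by
                intro s hs
                exact absurd rfl hs
              simp [dm, hp]
            rw [h1]
            exact dm_mem_dmSpan _ (by simp [tupleWt])
      | succ r =>
          obtain ⟨u, hu, w, hw, hbl⟩ := hx
          have hmapc : ∀ y ∈ dmSpan n m (r+1), constL n m y ∈ dmSpan n (m+1) (r+1) := by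
            intro y hy
            have h1 : constL n m y ∈ Submodule.map (constL n m) (dmSpan n m (r+1)) :=
              Submodule.mem_map_of_mem hy
            rw [dmSpan, Submodule.map_span] at h1
            refine Submodule.span_le.mpr ?_ h1
            rintro _ ⟨_, ⟨⟨j', hj'⟩, rfl⟩, rfl⟩
            rw [constL_dm hn j']
            refine dm_mem_dmSpan _ ?_
            rw [tupleWt_cons, if_neg (by simp)]
            omega
          have hmape : ∀ (l : Fin n), ∀ y ∈ dmSpan n m r,
              embL n m l y ∈ dmSpan n (m+1) (r+1) := by
            intro l y hy
            have h1 : embL n m l y ∈ Submodule.map (embL n m l) (dmSpan n m r) :=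
              Submodule.mem_map_of_mem hy
            rw [dmSpan, Submodule.map_span] at h1
            refine Submodule.span_le.mpr ?_ h1
            rintro _ ⟨_, ⟨⟨j', hj'⟩, rfl⟩, rfl⟩
            by_cases hl : l.val = 0
            · have hlz : l = (⟨0, hn⟩ : Fin n) := Fin.ext hl
              rw [hlz, embL_zero_val hn]
              refine Submodule.add_mem _ ?_ (Submodule.sum_mem _ fun l' hl' => ?_)
              · rw [constL_dm hn j']
                refine dm_mem_dmSpan _ ?_
                rw [tupleWt_cons, if_neg (by simp)]
                omega
              · rw [embL_dm l' (Finset.mem_filter.mp hl').2 j']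
                refine dm_mem_dmSpan _ ?_
                rw [tupleWt_cons, if_pos (Finset.mem_filter.mp hl').2]
                omega
            · rw [embL_dm l hl j']
              refine dm_mem_dmSpan _ ?_
              rw [tupleWt_cons, if_pos hl]
              omega
          have hdecomp : x = constL n m u
              + ∑ l : Fin n, embL n m l (if l.val = n - 1 then 0 else w l) := by
            funext i
            rw [Pi.add_apply, Finset.sum_apply]
            simp only [embL_apply, constL_apply]
            rw [Finset.sum_ite_eq]
            have h1 : x i = blockAt n m (i 0) x (Fin.tail i) := by
              show x i = x (Fin.cons (i 0) (Fin.tail i))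
              rw [Fin.cons_self_tail]
            rw [h1, hbl (i 0)]
            by_cases h : (i 0).val = n - 1 <;> simp [h]
          rw [hdecomp]
          refine Submodule.add_mem _ (hmapc u (ih (r+1) hu))
            (Submodule.sum_mem _ fun l _ => hmape l _ (ih r ?_))
          by_cases h : l.val = n - 1
          · rw [if_pos h]
            exact DBer_zero_mem n m r
          · rw [if_neg h]
            exact hw l

end DBerLemmas

/-- `{d_m(i') : 0 ≤ wt(i') ≤ r}` is a basis of `B_n^r(m)`, for `m ≥ 1`
and `0 ≤ r ≤ m`. -/
theorem stmt9 (n m r : ℕ) (hn : 2 ≤ n) (hm : 1 ≤ m) (hr : r ≤ m) :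
    LinearIndependent (ZMod 2)
      (fun i' : {i' : Fin m → Fin n // tupleWt i' ≤ r} => dm i'.1) ∧
    (Submodule.span (ZMod 2)
        (Set.range (fun i' : {i' : Fin m → Fin n // tupleWt i' ≤ r} => dm i'.1)) :
      Set ((Fin m → Fin n) → ZMod 2)) = DBer n r m := by
  constructor
  · exact (li_dm (n := n) m).comp _ Subtype.val_injective
  · apply Set.Subset.antisymm
    · intro x hx
      have hle : dmSpan n m r ≤ DBerM n r m := by
        refine Submodule.span_le.mpr ?_
        rintro _ ⟨⟨i', hi'⟩, rfl⟩
        exact dm_mem_DBer n m r i' hi'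
      exact hle hx
    · exact DBer_subset_span n (by omega) m r
end
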